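/- arXiv:2305.12261 — 2 statements merged into one kernel-verified Lean document; each statement's English description precedes it below -/
import Mathlib

section
/- Let $G_\delta$, $G_{\delta,12}$, $G_{\delta,21}$ be $N\times N$ complex matrices with $G_\delta$ Hermitian ($G_\delta^\dagger = G_\delta$) and $G_{\delta,12}^\dagger = G_{\delta,21}$, and let $H_1$, $H_2$ be $M\times L$ complex matrices. Define the $2MN\times 2LN$ matrix $H = \begin{pmatrix} H_1\otimes G_\delta & H_2\otimes G_{\delta,12} \\ H_1\otimes G_{\delta,21} & H_2\otimes G_\delta \end{pmatrix}$ and the $2MN\times 2MN$ matrix $\Sigma_\Omega = \begin{pmatrix} I_M\otimes G_\delta & I_M\otimes G_{\delta,12} \\ I_M\otimes G_{\delta,21} & I_M\otimes G_\delta \end{pmatrix}$, and assume $\Sigma_\Omega$ is invertible. Then $H^\dagger \Sigma_\Omega^{-1} H = \begin{pmatrix} H_1^\dagger H_1\otimes G_\delta & H_1^\dagger H_2\otimes G_{\delta,12} \\ H_2^\dagger H_1\otimes G_{\delta,21} & H_2^\dagger H_2\otimes G_\delta \end{pmatrix}$. -/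
/-!
Write `Σ_Ω` for the block matrix of the statement and `K` for the block diagonal matrix
`diag(H₁ ⊗ I_N, H₂ ⊗ I_N)`. Then `H = Σ_Ω K`, and since `Σ_Ω` is Hermitian,
`Hᴴ Σ_Ω⁻¹ H = Kᴴ Σ_Ω Σ_Ω⁻¹ Σ_Ω K = Kᴴ H`, which is computed blockwise by the mixed-product
rule for Kronecker products.
-/

open Matrix
open scoped Kronecker

namespace Matrix

variable {α : Type*} {l₁ l₂ m₁ m₂ n₁ n₂ p q r s : Type*}

theorem IsHermitian.kronecker [CommRing α] [StarRing α] {A : Matrix m₁ m₁ α}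
    {B : Matrix n₁ n₁ α} (hA : A.IsHermitian) (hB : B.IsHermitian) : (A ⊗ₖ B).IsHermitian := by
  rw [IsHermitian, conjTranspose_kronecker, hA.eq, hB.eq]

theorem conjTranspose_mul_inv_mul_self_of_isHermitian [Fintype n₁] [DecidableEq n₁]
    [CommRing α] [StarRing α] {S : Matrix n₁ n₁ α} (hS : S.IsHermitian) (hdet : IsUnit S.det)
    (K : Matrix n₁ m₁ α) : (S * K)ᴴ * S⁻¹ * (S * K) = Kᴴ * (S * K) := by
  rw [conjTranspose_mul, hS.eq, Matrix.mul_assoc, Matrix.mul_assoc, ← Matrix.mul_assoc S⁻¹,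
    nonsing_inv_mul S hdet, Matrix.one_mul]

section BlockKronecker

variable [CommSemiring α] [DecidableEq p] [DecidableEq q] [Fintype p] [Fintype q]

theorem fromBlocks_kronecker_mul_fromBlocks_kronecker_one [Fintype n₁] [Fintype n₂]
    (A : Matrix m₁ n₁ α) (B : Matrix m₁ n₂ α) (C : Matrix m₂ n₁ α) (D : Matrix m₂ n₂ α)
    (P : Matrix r p α) (Q : Matrix r q α) (R : Matrix s p α) (S : Matrix s q α)
    (X : Matrix n₁ l₁ α) (Y : Matrix n₂ l₂ α) :
    fromBlocks (A ⊗ₖ P) (B ⊗ₖ Q) (C ⊗ₖ R) (D ⊗ₖ S) *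
        fromBlocks (X ⊗ₖ (1 : Matrix p p α)) 0 0 (Y ⊗ₖ (1 : Matrix q q α)) =
      fromBlocks ((A * X) ⊗ₖ P) ((B * Y) ⊗ₖ Q) ((C * X) ⊗ₖ R) ((D * Y) ⊗ₖ S) := by
  simp [fromBlocks_multiply, ← mul_kronecker_mul]

theorem fromBlocks_kronecker_one_mul_fromBlocks_kronecker [Fintype m₁] [Fintype m₂]
    (X : Matrix l₁ m₁ α) (Y : Matrix l₂ m₂ α)
    (A : Matrix m₁ n₁ α) (B : Matrix m₁ n₂ α) (C : Matrix m₂ n₁ α) (D : Matrix m₂ n₂ α)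
    (P : Matrix p r α) (Q : Matrix p s α) (R : Matrix q r α) (S : Matrix q s α) :
    fromBlocks (X ⊗ₖ (1 : Matrix p p α)) 0 0 (Y ⊗ₖ (1 : Matrix q q α)) *
        fromBlocks (A ⊗ₖ P) (B ⊗ₖ Q) (C ⊗ₖ R) (D ⊗ₖ S) =
      fromBlocks ((X * A) ⊗ₖ P) ((X * B) ⊗ₖ Q) ((Y * C) ⊗ₖ R) ((Y * D) ⊗ₖ S) := by
  simp [fromBlocks_multiply, ← mul_kronecker_mul]

end BlockKronecker

end Matrix

/-- Simplification of `Hᴴ Σ_Ω⁻¹ H` for the MIMO aMAC FTN channel matrix. -/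
theorem stmt_2 (M L N : ℕ)
    (Gδ G12 G21 : Matrix (Fin N) (Fin N) ℂ)
    (hGδ : Gδᴴ = Gδ) (hG12 : G12ᴴ = G21)
    (H1 H2 : Matrix (Fin M) (Fin L) ℂ)
    (hSig : IsUnit (Matrix.fromBlocks
      ((1 : Matrix (Fin M) (Fin M) ℂ) ⊗ₖ Gδ) ((1 : Matrix (Fin M) (Fin M) ℂ) ⊗ₖ G12)
      ((1 : Matrix (Fin M) (Fin M) ℂ) ⊗ₖ G21) ((1 : Matrix (Fin M) (Fin M) ℂ) ⊗ₖ Gδ)).det) :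
    (Matrix.fromBlocks (H1 ⊗ₖ Gδ) (H2 ⊗ₖ G12) (H1 ⊗ₖ G21) (H2 ⊗ₖ Gδ))ᴴ *
      (Matrix.fromBlocks
        ((1 : Matrix (Fin M) (Fin M) ℂ) ⊗ₖ Gδ) ((1 : Matrix (Fin M) (Fin M) ℂ) ⊗ₖ G12)
        ((1 : Matrix (Fin M) (Fin M) ℂ) ⊗ₖ G21) ((1 : Matrix (Fin M) (Fin M) ℂ) ⊗ₖ Gδ))⁻¹ *
      Matrix.fromBlocks (H1 ⊗ₖ Gδ) (H2 ⊗ₖ G12) (H1 ⊗ₖ G21) (H2 ⊗ₖ Gδ) =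
    Matrix.fromBlocks
      ((H1ᴴ * H1) ⊗ₖ Gδ) ((H1ᴴ * H2) ⊗ₖ G12)
      ((H2ᴴ * H1) ⊗ₖ G21) ((H2ᴴ * H2) ⊗ₖ Gδ) := by
  set Sig := fromBlocks
      ((1 : Matrix (Fin M) (Fin M) ℂ) ⊗ₖ Gδ) ((1 : Matrix (Fin M) (Fin M) ℂ) ⊗ₖ G12)
      ((1 : Matrix (Fin M) (Fin M) ℂ) ⊗ₖ G21) ((1 : Matrix (Fin M) (Fin M) ℂ) ⊗ₖ Gδ)
  set K := fromBlocks (H1 ⊗ₖ (1 : Matrix (Fin N) (Fin N) ℂ)) 0 0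
      (H2 ⊗ₖ (1 : Matrix (Fin N) (Fin N) ℂ))
  have hSigHerm : Sig.IsHermitian :=
    .fromBlocks (isHermitian_one.kronecker hGδ) (by rw [conjTranspose_kronecker,
      conjTranspose_one, hG12]) (isHermitian_one.kronecker hGδ)
  have hH : fromBlocks (H1 ⊗ₖ Gδ) (H2 ⊗ₖ G12) (H1 ⊗ₖ G21) (H2 ⊗ₖ Gδ) = Sig * K := by
    rw [fromBlocks_kronecker_mul_fromBlocks_kronecker_one]
    simp only [Matrix.one_mul]
  have hK : Kᴴ = fromBlocks (H1ᴴ ⊗ₖ (1 : Matrix (Fin N) (Fin N) ℂ)) 0 0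
      (H2ᴴ ⊗ₖ (1 : Matrix (Fin N) (Fin N) ℂ)) := by
    simp only [K, fromBlocks_conjTranspose, conjTranspose_kronecker, conjTranspose_one,
      conjTranspose_zero]
  rw [hH, conjTranspose_mul_inv_mul_self_of_isHermitian hSigHerm hSig, ← hH, hK,
    fromBlocks_kronecker_one_mul_fromBlocks_kronecker]
end

section
/- Let $G_\delta$, $G_{\delta,12}$, $G_{\delta,21}$ be $N\times N$ complex matrices with $G_\delta$ Hermitian ($G_\delta^\dagger = G_\delta$) and $G_{\delta,12}^\dagger = G_{\delta,21}$, let $H_1$, $H_2$ be $M\times L$ complex matrices, let $H = \begin{pmatrix} H_1\otimes G_\delta & H_2\otimes G_{\delta,12} \\ H_1\otimes G_{\delta,21} & H_2\otimes G_\delta \end{pmatrix}$ (a $2MN\times 2LN$ matrix), and let $\Sigma_\Omega = \begin{pmatrix} I_M\otimes G_\delta & I_M\otimes G_{\delta,12} \\ I_M\otimes G_{\delta,21} & I_M\otimes G_\delta \end{pmatrix}$ be invertible. Then for any $LN\times LN$ complex matrices $\Sigma_{A1}$, $\Sigma_{A2}$, $\det\Big(I_{2MN} + \Sigma_\Omega^{-1}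 H \begin{pmatrix} \Sigma_{A1} & 0 \\ 0 & \Sigma_{A2} \end{pmatrix} H^\dagger\Big) = \det\Big(I_{2LN} + \begin{pmatrix} H_1^\dagger H_1\otimes G_\delta & H_1^\dagger H_2\otimes G_{\delta,12} \\ H_2^\dagger H_1\otimes G_{\delta,21} & H_2^\dagger H_2\otimes G_\delta \end{pmatrix} \begin{pmatrix} \Sigma_{A1} & 0 \\ 0 & \Sigma_{A2} \end{pmatrix}\Big)$. -/
/-!
Writing `Σ_Ω` for the block matrix of the `I_M ⊗ G`'s, the channel matrix factors as
`H = Σ_Ω * diag(H₁ ⊗ I_N, H₂ ⊗ I_N)`, so `Σ_Ω⁻¹ H = diag(H₁ ⊗ I_N, H₂ ⊗ I_N)`. Sylvester's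
determinant identity `det (1 + X Y) = det (1 + Y X)` then moves `Hᴴ` to the front, and
`Hᴴ * diag(H₁ ⊗ I_N, H₂ ⊗ I_N)` is the Gram-type block matrix on the right-hand side.
-/

open Matrix
open scoped Kronecker

namespace Matrix

variable {R m n l k : Type*} [Fintype m] [Fintype k] [DecidableEq k]

theorem fromBlocks_kronecker_eq_mul_fromBlocks [DecidableEq m] [CommSemiring R]
    (A : Matrix m l R) (B : Matrix m n R) (G₁₁ G₁₂ G₂₁ G₂₂ : Matrix k k R) :
    fromBlocks (A ⊗ₖ G₁₁) (B ⊗ₖ G₁₂) (A ⊗ₖ G₂₁) (B ⊗ₖ G₂₂) =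
      fromBlocks ((1 : Matrix m m R) ⊗ₖ G₁₁) ((1 : Matrix m m R) ⊗ₖ G₁₂)
          ((1 : Matrix m m R) ⊗ₖ G₂₁) ((1 : Matrix m m R) ⊗ₖ G₂₂) *
        fromBlocks (A ⊗ₖ (1 : Matrix k k R)) 0 0 (B ⊗ₖ (1 : Matrix k k R)) := by
  simp [fromBlocks_multiply, ← mul_kronecker_mul]

theorem conjTranspose_fromBlocks_kronecker_mul_fromBlocks [CommSemiring R] [StarRing R]
    (A : Matrix m l R) (B : Matrix m n R) (G₁₁ G₁₂ G₂₁ G₂₂ : Matrix k k R) :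
    (fromBlocks (A ⊗ₖ G₁₁) (B ⊗ₖ G₁₂) (A ⊗ₖ G₂₁) (B ⊗ₖ G₂₂))ᴴ *
        fromBlocks (A ⊗ₖ (1 : Matrix k k R)) 0 0 (B ⊗ₖ (1 : Matrix k k R)) =
      fromBlocks ((Aᴴ * A) ⊗ₖ G₁₁ᴴ) ((Aᴴ * B) ⊗ₖ G₂₁ᴴ)
        ((Bᴴ * A) ⊗ₖ G₁₂ᴴ) ((Bᴴ * B) ⊗ₖ G₂₂ᴴ) := by
  simp [fromBlocks_conjTranspose, conjTranspose_kronecker, fromBlocks_multiply,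
    ← mul_kronecker_mul]

end Matrix

/-- Determinant identity used to simplify the sum-rate mutual information expression. -/
theorem stmt_3 (M L N : ℕ)
    (Gδ G12 G21 : Matrix (Fin N) (Fin N) ℂ)
    (hGδ : Gδᴴ = Gδ) (hG12 : G12ᴴ = G21)
    (H1 H2 : Matrix (Fin M) (Fin L) ℂ)
    (hSig : IsUnit (Matrix.fromBlocks
      ((1 : Matrix (Fin M) (Fin M) ℂ) ⊗ₖ Gδ) ((1 : Matrix (Fin M) (Fin M) ℂ) ⊗ₖ G12)
      ((1 : Matrix (Fin M) (Fin M) ℂ) ⊗ₖ G21) ((1 : Matrix (Fin M) (Fin M) ℂ) ⊗ₖ Gδ)).det)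
    (SA1 SA2 : Matrix (Fin L × Fin N) (Fin L × Fin N) ℂ) :
    (1 + (Matrix.fromBlocks
        ((1 : Matrix (Fin M) (Fin M) ℂ) ⊗ₖ Gδ) ((1 : Matrix (Fin M) (Fin M) ℂ) ⊗ₖ G12)
        ((1 : Matrix (Fin M) (Fin M) ℂ) ⊗ₖ G21) ((1 : Matrix (Fin M) (Fin M) ℂ) ⊗ₖ Gδ))⁻¹ *
      (Matrix.fromBlocks (H1 ⊗ₖ Gδ) (H2 ⊗ₖ G12) (H1 ⊗ₖ G21) (H2 ⊗ₖ Gδ)) *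
      Matrix.fromBlocks SA1 0 0 SA2 *
      (Matrix.fromBlocks (H1 ⊗ₖ Gδ) (H2 ⊗ₖ G12) (H1 ⊗ₖ G21) (H2 ⊗ₖ Gδ))ᴴ).det =
    (1 + Matrix.fromBlocks
        ((H1ᴴ * H1) ⊗ₖ Gδ) ((H1ᴴ * H2) ⊗ₖ G12)
        ((H2ᴴ * H1) ⊗ₖ G21) ((H2ᴴ * H2) ⊗ₖ Gδ) *
      Matrix.fromBlocks SA1 0 0 SA2).det := by
  have hG21 : G21ᴴ = G12 := by rw [← hG12, conjTranspose_conjTranspose]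
  have hgram := conjTranspose_fromBlocks_kronecker_mul_fromBlocks H1 H2 Gδ G12 G21 Gδ
  rw [hGδ, hG12, hG21] at hgram
  have hinv := nonsing_inv_mul_cancel_left _
    (fromBlocks (H1 ⊗ₖ (1 : Matrix (Fin N) (Fin N) ℂ)) 0 0
      (H2 ⊗ₖ (1 : Matrix (Fin N) (Fin N) ℂ))) hSig
  rw [← fromBlocks_kronecker_eq_mul_fromBlocks] at hinv
  rw [hinv, det_one_add_mul_comm, ← Matrix.mul_assoc, hgram]
end
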